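/- Let A, B be nonempty finite sets, π a uniformly random permutation of a finite ground set U ⊇ A ∪ B, and let the random variable X be 1 if min π(A) = min π(B) and 0 otherwise. Then E[X] = J(A,B) where J(A,B) = |A ∩ B|/|A ∪ B|; i.e., X is an unbiased estimator of the Jaccard similarity. -/

import Mathlib

/-!
For a permutation `σ`, `min σ(A) = min σ(B)` holds exactly when the unique element of `A ∪ B`
minimising `σ` lies in `A ∩ B`. Precomposing with the transposition `(x y)` matches the
permutations minimised at `x` with those minimised at `y`, so the minimiser is uniformly
distributed on `A ∪ B` and lands in `A ∩ B` with probability `|A ∩ B| / |A ∪ B|`.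
-/

open Finset Equiv Function

theorem Function.Injective.eq_of_isMinOn {α β : Type*} [PartialOrder β] {f : α → β}
    (hf : Injective f) {s : Set α} {x y : α} (hx : x ∈ s) (hy : y ∈ s)
    (hfx : IsMinOn f s x) (hfy : IsMinOn f s y) : x = y :=
  hf (le_antisymm (hfx hy) (hfy hx))

namespace Finset

variable {α β : Type*} [LinearOrder β] {f : α → β}

theorem min_image_eq_of_isMinOn {s : Finset α} {x : α} (hx : x ∈ s) (hfx : IsMinOn f s x) :
    (s.image f).min = f x :=
  le_antisymm (min_le (mem_image_of_mem f hx))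
    (Finset.le_min fun _ hb ↦ by
      obtain ⟨a, ha, rfl⟩ := mem_image.1 hb
      exact WithTop.coe_le_coe.2 (hfx ha))

variable [DecidableEq α] {A B : Finset α}

theorem mem_of_isMinOn_union_of_min_image_eq (hf : Injective f) {x : α} (hxA : x ∈ A)
    (hfx : IsMinOn f ↑(A ∪ B) x) (h : (A.image f).min = (B.image f).min) : x ∈ B := by
  have hB : (B.image f).min = f x :=
    h ▸ min_image_eq_of_isMinOn hxA (hfx.on_subset (by simp))
  obtain ⟨b, hb, hbx⟩ := mem_image.1 (mem_of_min hB)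
  exact hf hbx ▸ hb

theorem min_image_eq_min_image_iff (hf : Injective f) (hAB : (A ∪ B).Nonempty) :
    (A.image f).min = (B.image f).min ↔ ∃ x ∈ A ∩ B, IsMinOn f ↑(A ∪ B) x := by
  constructor
  · intro h
    obtain ⟨x, hx, hfx⟩ := exists_min_image _ f hAB
    replace hfx : IsMinOn f ↑(A ∪ B) x := isMinOn_iff.2 hfx
    refine ⟨x, ?_, hfx⟩
    rcases mem_union.1 hx with hxA | hxB
    · exact mem_inter.2 ⟨hxA, mem_of_isMinOn_union_of_min_image_eq hf hxA hfx h⟩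
    · rw [union_comm] at hfx
      exact mem_inter.2 ⟨mem_of_isMinOn_union_of_min_image_eq hf hxB hfx h.symm, hxB⟩
  · rintro ⟨x, hx, hfx⟩
    obtain ⟨hxA, hxB⟩ := mem_inter.1 hx
    rw [min_image_eq_of_isMinOn hxA (hfx.on_subset (by simp)),
      min_image_eq_of_isMinOn hxB (hfx.on_subset (by simp))]

end Finset

namespace Equiv.Perm

theorem mapsTo_swap {α : Type*} [DecidableEq α] {t : Set α} {x y : α} (hx : x ∈ t) (hy : y ∈ t) :
    Set.MapsTo (swap x y) t t := by
  intro z hz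
  rw [swap_apply_def]
  split_ifs <;> assumption

open scoped Classical

variable {α : Type*} [Fintype α] [LinearOrder α] {s : Finset α} {x y : α}

theorem card_isMinOn_eq (hx : x ∈ s) (hy : y ∈ s) :
    #{σ : Perm α | IsMinOn σ s x} = #{σ : Perm α | IsMinOn σ s y} := by
  have hmaps := mapsTo_swap (t := (s : Set α)) hx hy
  refine card_nbij' (· * swap x y) (· * swap x y) ?_ ?_ ?_ ?_
  · intro σ hσ
    simp only [mem_coe, mem_filter, mem_univ, true_and, coe_mul] at hσ ⊢
    exact hσ.comp_mapsTo hmaps (swap_apply_right x y)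
  · intro σ hσ
    simp only [mem_coe, mem_filter, mem_univ, true_and, coe_mul] at hσ ⊢
    exact hσ.comp_mapsTo hmaps (swap_apply_left x y)
  all_goals exact fun σ _ ↦ mul_swap_mul_self x y σ

theorem pairwiseDisjoint_isMinOn (s : Finset α) :
    (s : Set α).PairwiseDisjoint fun x ↦ ({σ : Perm α | IsMinOn σ s x} : Finset (Perm α)) := by
  intro x hx y hy hxy
  refine disjoint_filter.2 fun σ _ hσx hσy ↦ hxy ?_
  exact σ.injective.eq_of_isMinOn hx hy hσx hσy

theorem card_mul_card_isMinOn (hx : x ∈ s) :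
    #s * #{σ : Perm α | IsMinOn σ s x} = Fintype.card (Perm α) := by
  have hcover : s.biUnion (fun y ↦ {σ : Perm α | IsMinOn σ s y}) = univ := by
    refine eq_univ_of_forall fun σ ↦ ?_
    obtain ⟨y, hy, hσy⟩ := exists_min_image s σ ⟨x, hx⟩
    exact mem_biUnion.2 ⟨y, hy, mem_filter.2 ⟨mem_univ σ, isMinOn_iff.2 hσy⟩⟩
  calc #s * #{σ : Perm α | IsMinOn σ s x}
      = ∑ y ∈ s, #{σ : Perm α | IsMinOn σ s y} := by
        rw [sum_congr rfl fun y hy ↦ card_isMinOn_eq hy hx, sum_const, smul_eq_mul]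
    _ = Fintype.card (Perm α) := by
        rw [← card_biUnion (pairwiseDisjoint_isMinOn s), hcover, card_univ]

theorem card_min_image_eq {A B : Finset α} (hx : x ∈ A ∪ B) :
    #{σ : Perm α | (A.image σ).min = (B.image σ).min}
      = #(A ∩ B) * #{σ : Perm α | IsMinOn σ ↑(A ∪ B) x} := by
  have hsplit : ({σ : Perm α | (A.image σ).min = (B.image σ).min} : Finset (Perm α))
      = (A ∩ B).biUnion fun y ↦ {σ : Perm α | IsMinOn σ ↑(A ∪ B) y} := by
    ext σ
    simp only [mem_filter, mem_univ, true_and, mem_biUnion,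
      min_image_eq_min_image_iff σ.injective ⟨x, hx⟩]
  rw [hsplit,
    card_biUnion ((pairwiseDisjoint_isMinOn _).subset (coe_subset.2 inter_subset_union)),
    sum_congr rfl fun y hy ↦ card_isMinOn_eq (inter_subset_union hy) hx, sum_const, smul_eq_mul]

end Equiv.Perm

theorem minhash_indicator_unbiased_general
    (n : ℕ) (A B : Finset (Fin n)) (hA : A.Nonempty) :
    (∑ π : Equiv.Perm (Fin n),
        (if (A.image π).min = (B.image π).min then (1 : ℝ) else 0))
        / (Fintype.card (Equiv.Perm (Fin n)))
      = ((A ∩ B).card : ℝ) / ((A ∪ B).card : ℝ) := by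
  classical
  obtain ⟨x, hx⟩ := hA.mono subset_union_left
  have hcard := Perm.card_mul_card_isMinOn hx
  have hfiber : (#{σ : Perm (Fin n) | IsMinOn σ ↑(A ∪ B) x} : ℝ) ≠ 0 :=
    Nat.cast_ne_zero.2 (Nat.pos_of_mul_pos_left (hcard ▸ Fintype.card_pos)).ne'
  rw [sum_boole, Perm.card_min_image_eq hx, ← hcard, Nat.cast_mul, Nat.cast_mul]
  exact mul_div_mul_right _ _ hfiber

/-- MinHash indicator unbiasedness: for nonempty finite sets `A, B ⊆ Fin n`, the
expectation (over a uniformly random permutation `π`) of the indicator of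
`min π(A) = min π(B)` equals the Jaccard similarity `J(A,B) = |A ∩ B| / |A ∪ B|`. -/
theorem minhash_indicator_unbiased
    (n : ℕ) (A B : Finset (Fin n)) (hA : A.Nonempty) (hB : B.Nonempty) :
    (∑ π : Equiv.Perm (Fin n),
        (if (A.image π).min = (B.image π).min then (1 : ℝ) else 0))
        / (Fintype.card (Equiv.Perm (Fin n)))
      = ((A ∩ B).card : ℝ) / ((A ∪ B).card : ℝ) :=
  minhash_indicator_unbiased_general n A B hA
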